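/- (Theorem: characterization with binary variable.) Suppose S takes values in {0,1}. The random variables Z and S are conditionally independent given F if and only if, for every measurable function h : 𝒳_Z × 𝒳_F → ℝ with E[h(Z,F)²] < ∞, one has Q(h) = 0, where Q(h) := E[𝟙{S=1} · P(S=0|F) · h(Z,F)] − E[𝟙{S=0} · P(S=1|F) · h(Z,F)]. -/

import Mathlib

/-!
Write `I = 𝟙{S = 1}` and `p = P(S = 1 | F)`. Since `S` is binary, `σ(S)` is generated by the
single event `{S = 1}`, `𝟙{S = 0} = 1 - I` and `P(S = 0 | F) = 1 - p`, so that
`Q(h) = E[(I - p) h(Z, F)]`. Conditional independence of `Z` and `S` given `F` is equivalent to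
`E[I | Z, F] = p`: one direction is the tower property followed by pulling out `p`, the other
checks the defining identity of `E[I | Z, F]` on the π-system of rectangles `{Z ∈ s, F ∈ u}`.
As `p` is itself a square-integrable function of `(Z, F)`, the equation `E[I | Z, F] = p` says
exactly that `I - p` is orthogonal to every square-integrable `h(Z, F)`.
-/

open MeasureTheory ProbabilityTheory

section

variable {Ω : Type*} {m m₂ : MeasurableSpace Ω} {mΩ : MeasurableSpace Ω} {μ : Measure Ω}

lemma indicator_one_mul_eq_indicator {M : Type*} [MulZeroOneClass M] (A : Set Ω) (f : Ω → M) :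
    A.indicator (fun _ => (1 : M)) * f = A.indicator f := by
  ext ω
  by_cases hω : ω ∈ A <;> simp [hω]

lemma integrable_indicator_one_mul {A : Set Ω} (hA : MeasurableSet A)
    {f : Ω → ℝ} (hf : Integrable f μ) : Integrable (A.indicator (fun _ => (1 : ℝ)) * f) μ := by
  rw [indicator_one_mul_eq_indicator]
  exact hf.indicator hA

lemma condExp_inter_ae_eq_mul_of_condExp_ae_eq [IsFiniteMeasure μ]
    (hm : m ≤ m₂) (hm₂ : m₂ ≤ mΩ) {A B : Set Ω} (hA : MeasurableSet[m₂] A)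
    (hB : MeasurableSet B) (h : μ⟦B | m₂⟧ =ᵐ[μ] μ⟦B | m⟧) :
    μ⟦A ∩ B | m⟧ =ᵐ[μ] μ⟦A | m⟧ * μ⟦B | m⟧ := by
  set χA := A.indicator fun _ => (1 : ℝ)
  have hA_sm : StronglyMeasurable[m₂] χA := stronglyMeasurable_const.indicator hA
  have hB_int : Integrable (B.indicator fun _ => (1 : ℝ)) μ :=
    (integrable_const 1).indicator hB
  have hinter : (A ∩ B).indicator (fun _ => (1 : ℝ)) = χA * B.indicator fun _ => 1 :=
    Set.inter_indicator_one
  calc μ⟦A ∩ B | m⟧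
      =ᵐ[μ] μ[μ[χA * B.indicator (fun _ => 1) | m₂] | m] := by
        rw [hinter]
        exact (condExp_condExp_of_le hm hm₂).symm
    _ =ᵐ[μ] μ[χA * μ⟦B | m⟧ | m] := by
        refine condExp_congr_ae ?_
        filter_upwards [condExp_mul_of_stronglyMeasurable_left hA_sm
          (integrable_indicator_one_mul (hm₂ _ hA) hB_int) hB_int, h] with ω h₁ h₂
        simp only [h₁, Pi.mul_apply, h₂]
    _ =ᵐ[μ] μ⟦A | m⟧ * μ⟦B | m⟧ :=
        condExp_mul_of_stronglyMeasurable_right stronglyMeasurable_condExp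
          (integrable_indicator_one_mul (hm₂ _ hA) integrable_condExp)
          ((integrable_const 1).indicator (hm₂ _ hA))

lemma setIntegral_inter_indicator_eq_of_condExp_inter_ae_eq_mul [IsFiniteMeasure μ]
    (hm : m ≤ mΩ) {A B C : Set Ω} (hA : MeasurableSet A) (hB : MeasurableSet B)
    (hC : MeasurableSet[m] C) (h : μ⟦A ∩ B | m⟧ =ᵐ[μ] μ⟦A | m⟧ * μ⟦B | m⟧) :
    ∫ ω in C ∩ A, B.indicator (fun _ => (1 : ℝ)) ω ∂μ = ∫ ω in C ∩ A, (μ⟦B | m⟧) ω ∂μ := by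
  have hAp_int : Integrable (A.indicator (fun _ => (1 : ℝ)) * μ⟦B | m⟧) μ :=
    integrable_indicator_one_mul hA integrable_condExp
  calc ∫ ω in C ∩ A, B.indicator (fun _ => (1 : ℝ)) ω ∂μ
      = ∫ ω in C, (A ∩ B).indicator (fun _ => (1 : ℝ)) ω ∂μ := by
        rw [← setIntegral_indicator hA, Set.indicator_indicator]
    _ = ∫ ω in C, (μ⟦A | m⟧ * μ⟦B | m⟧) ω ∂μ := by
        rw [← setIntegral_condExp hm ((integrable_const 1).indicator (hA.inter hB)) hC]
        exact setIntegral_congr_ae (hm _ hC) (h.mono fun ω hω _ => hω)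
    _ = ∫ ω in C, μ[A.indicator (fun _ => 1) * μ⟦B | m⟧ | m] ω ∂μ := by
        refine setIntegral_congr_ae (hm _ hC) ?_
        filter_upwards [condExp_mul_of_stronglyMeasurable_right stronglyMeasurable_condExp
          hAp_int ((integrable_const 1).indicator hA)] with ω hω _
        rw [hω]
    _ = ∫ ω in C ∩ A, (μ⟦B | m⟧) ω ∂μ := by
        rw [setIntegral_condExp hm hAp_int hC, indicator_one_mul_eq_indicator,
          setIntegral_indicator hA]

variable {β γ E : Type*} [MeasurableSpace β] [MeasurableSpace γ]
  [NormedAddCommGroup E] [NormedSpace ℝ E] [CompleteSpace E] {Z : Ω → β} {F : Ω → γ}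

lemma comap_eq_generateFrom_preimage_one {S : Ω → ℝ} (hS01 : ∀ ω, S ω = 0 ∨ S ω = 1) :
    MeasurableSpace.comap S inferInstance = MeasurableSpace.generateFrom {S ⁻¹' {1}} := by
  refine le_antisymm ?_ (MeasurableSpace.generateFrom_le ?_)
  · have hS : S = (S ⁻¹' {1}).indicator 1 := by
      ext ω
      rcases hS01 ω with h | h <;> simp [h]
    let _ : MeasurableSpace Ω := MeasurableSpace.generateFrom {S ⁻¹' {1}}
    have hS_meas : Measurable ((S ⁻¹' {1}).indicator (1 : Ω → ℝ)) :=
      measurable_one.indicator (MeasurableSpace.measurableSet_generateFrom rfl)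
    rw [← hS] at hS_meas
    exact hS_meas.comap_le
  · rintro _ rfl
    exact ⟨{1}, measurableSet_singleton 1, rfl⟩

theorem condIndepFun_iff_forall_condExp_inter_preimage_one_ae_eq_mul [StandardBorelSpace Ω]
    [IsFiniteMeasure μ] (hm : m ≤ mΩ) {S : Ω → ℝ} (hZ : Measurable Z) (hS : Measurable S)
    (hS01 : ∀ ω, S ω = 0 ∨ S ω = 1) :
    CondIndepFun m hm Z S μ ↔ ∀ s, MeasurableSet s →
      μ⟦Z ⁻¹' s ∩ S ⁻¹' {1} | m⟧ =ᵐ[μ] μ⟦Z ⁻¹' s | m⟧ * μ⟦S ⁻¹' {1} | m⟧ := by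
  refine ⟨fun h s hs => (condIndepFun_iff_condExp_inter_preimage_eq_mul hZ hS).1 h s {1} hs
    (measurableSet_singleton 1), fun h => ?_⟩
  rw [condIndepFun_iff_condIndep, comap_eq_generateFrom_preimage_one hS01]
  refine CondIndepSets.condIndep hZ.comap_le ?_
    (MeasurableSpace.comap Z inferInstance).isPiSystem_measurableSet (IsPiSystem.singleton _)
    (@MeasurableSpace.generateFrom_measurableSet Ω (MeasurableSpace.comap Z inferInstance)).symm
    rfl ?_
  · rw [← comap_eq_generateFrom_preimage_one hS01]
    exact hS.comap_le
  rw [condIndepSets_iff]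
  · rintro _ _ ⟨s, hs, rfl⟩ rfl
    exact h s hs
  · rintro _ ⟨s, hs, rfl⟩
    exact hZ hs
  · rintro _ rfl
    exact hS (measurableSet_singleton 1)

lemma comap_le_comap_prodMk_left (Z : Ω → β) (F : Ω → γ) :
    MeasurableSpace.comap Z inferInstance ≤
      MeasurableSpace.comap (fun ω => (Z ω, F ω)) inferInstance :=
  (comap_measurable (fun ω => (Z ω, F ω))).fst.comap_le

lemma comap_le_comap_prodMk_right (Z : Ω → β) (F : Ω → γ) :
    MeasurableSpace.comap F inferInstance ≤
      MeasurableSpace.comap (fun ω => (Z ω, F ω)) inferInstance :=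
  (comap_measurable (fun ω => (Z ω, F ω))).snd.comap_le

lemma ae_eq_condExp_comap_prodMk_of_forall_setIntegral_eq [IsFiniteMeasure μ]
    (hZ : Measurable Z) (hF : Measurable F) {f g : Ω → E} (hf : Integrable f μ)
    (hg : Integrable g μ)
    (hgm : StronglyMeasurable[MeasurableSpace.comap (fun ω => (Z ω, F ω)) inferInstance] g)
    (h : ∀ s u, MeasurableSet s → MeasurableSet u →
      ∫ ω in F ⁻¹' u ∩ Z ⁻¹' s, g ω ∂μ = ∫ ω in F ⁻¹' u ∩ Z ⁻¹' s, f ω ∂μ) :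
    g =ᵐ[μ] μ[f | MeasurableSpace.comap (fun ω => (Z ω, F ω)) inferInstance] := by
  have hZF : Measurable fun ω => (Z ω, F ω) := hZ.prodMk hF
  refine ae_eq_condExp_of_forall_setIntegral_eq hZF.comap_le hf (fun _ _ _ => hg.integrableOn)
    ?_ hgm.aestronglyMeasurable
  rintro _ ⟨t, ht, rfl⟩ -
  induction t, ht using
    MeasurableSpace.induction_on_inter generateFrom_prod.symm isPiSystem_prod with
  | empty => simp
  | basic t ht =>
    obtain ⟨s, hs, u, hu, rfl⟩ := ht
    rw [Set.mk_preimage_prod, Set.inter_comm]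
    exact h s u hs hu
  | compl t ht ih =>
    -- the rectangle `univ ×ˢ univ` gives the equality of the total integrals
    have huniv := h Set.univ Set.univ MeasurableSet.univ MeasurableSet.univ
    simp only [Set.preimage_univ, Set.inter_univ, Measure.restrict_univ] at huniv
    have hg_split := integral_add_compl (hZF ht) hg
    rw [ih, huniv, ← integral_add_compl (hZF ht) hf] at hg_split
    rw [Set.preimage_compl]
    exact add_left_cancel hg_split
  | iUnion t hdisj ht ih =>
    have hdisj' : Pairwise (Function.onFun Disjoint fun i => (fun ω => (Z ω, F ω)) ⁻¹' t i) :=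
      fun i j hij => (hdisj hij).preimage _
    rw [Set.preimage_iUnion, integral_iUnion (fun i => hZF (ht i)) hdisj' hg.integrableOn,
      integral_iUnion (fun i => hZF (ht i)) hdisj' hf.integrableOn]
    exact tsum_congr ih

theorem forall_condExp_inter_preimage_ae_eq_mul_iff [IsFiniteMeasure μ] (hZ : Measurable Z)
    (hF : Measurable F) {B : Set Ω} (hB : MeasurableSet B) :
    (∀ s, MeasurableSet s →
      μ⟦Z ⁻¹' s ∩ B | MeasurableSpace.comap F inferInstance⟧ =ᵐ[μ]
        μ⟦Z ⁻¹' s | MeasurableSpace.comap F inferInstance⟧ *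
          μ⟦B | MeasurableSpace.comap F inferInstance⟧) ↔
      μ⟦B | MeasurableSpace.comap (fun ω => (Z ω, F ω)) inferInstance⟧ =ᵐ[μ]
        μ⟦B | MeasurableSpace.comap F inferInstance⟧ := by
  constructor
  · intro h
    refine (ae_eq_condExp_comap_prodMk_of_forall_setIntegral_eq hZ hF
      ((integrable_const 1).indicator hB) integrable_condExp
      (stronglyMeasurable_condExp.mono (comap_le_comap_prodMk_right Z F)) ?_).symm
    intro s u hs hu
    exact (setIntegral_inter_indicator_eq_of_condExp_inter_ae_eq_mul hF.comap_le (hZ hs) hB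
      ⟨u, hu, rfl⟩ (h s hs)).symm
  · intro h s hs
    exact condExp_inter_ae_eq_mul_of_condExp_ae_eq (comap_le_comap_prodMk_right Z F)
      (hZ.prodMk hF).comap_le (comap_le_comap_prodMk_left Z F _ ⟨s, hs, rfl⟩) hB h

theorem condIndepFun_iff_condExp_comap_prodMk_ae_eq [StandardBorelSpace Ω] [IsFiniteMeasure μ]
    {S : Ω → ℝ} (hZ : Measurable Z) (hF : Measurable F) (hS : Measurable S)
    (hS01 : ∀ ω, S ω = 0 ∨ S ω = 1) :
    CondIndepFun (MeasurableSpace.comap F inferInstance) hF.comap_le Z S μ ↔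
      μ⟦S ⁻¹' {1} | MeasurableSpace.comap (fun ω => (Z ω, F ω)) inferInstance⟧ =ᵐ[μ]
        μ⟦S ⁻¹' {1} | MeasurableSpace.comap F inferInstance⟧ :=
  (condIndepFun_iff_forall_condExp_inter_preimage_one_ae_eq_mul hF.comap_le hZ hS hS01).trans
    (forall_condExp_inter_preimage_ae_eq_mul_iff hZ hF (hS (measurableSet_singleton 1)))

theorem condExp_comap_ae_eq_iff_forall_integral_mul_eq_zero [IsFiniteMeasure μ] {Y : Ω → β}
    (hY : Measurable Y) {f q : Ω → ℝ} (hf : MemLp f 2 μ) (hq : MemLp q 2 μ)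
    (hqm : StronglyMeasurable[MeasurableSpace.comap Y inferInstance] q) :
    μ[f | MeasurableSpace.comap Y inferInstance] =ᵐ[μ] q ↔
      ∀ h : β → ℝ, Measurable h → MemLp (fun ω => h (Y ω)) 2 μ →
        ∫ ω, (f ω - q ω) * h (Y ω) ∂μ = 0 := by
  set mY := MeasurableSpace.comap Y inferInstance
  have hf_int : Integrable f μ := hf.integrable one_le_two
  have hq_int : Integrable q μ := hq.integrable one_le_two
  constructor
  · intro hcond h hh hhY
    have hhY_sm : StronglyMeasurable[mY] fun ω => h (Y ω) :=
      (hh.comp (comap_measurable Y)).stronglyMeasurable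
    have hzero : μ[f - q | mY] =ᵐ[μ] 0 := by
      filter_upwards [condExp_sub hf_int hq_int mY, hcond] with ω h₁ h₂
      rw [h₁, Pi.sub_apply, h₂, condExp_of_stronglyMeasurable hY.comap_le hqm hq_int,
        Pi.zero_apply, sub_self]
    calc ∫ ω, (f ω - q ω) * h (Y ω) ∂μ
        = ∫ ω, μ[(f - q) * (fun ω => h (Y ω)) | mY] ω ∂μ := (integral_condExp hY.comap_le).symm
      _ = ∫ ω, (0 : Ω → ℝ) ω ∂μ := by
          refine integral_congr_ae ?_
          filter_upwards [condExp_mul_of_stronglyMeasurable_right hhY_sm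
            ((hf.sub hq).integrable_mul hhY) (hf_int.sub hq_int), hzero] with ω h₁ h₂
          rw [h₁, Pi.mul_apply, h₂, Pi.zero_apply, zero_mul]
      _ = 0 := integral_zero Ω ℝ
  · intro h
    refine (ae_eq_condExp_of_forall_setIntegral_eq hY.comap_le hf_int
      (fun _ _ _ => hq_int.integrableOn) ?_ hqm.aestronglyMeasurable).symm
    rintro _ ⟨t, ht, rfl⟩ -
    have ht_ind := h (t.indicator fun _ => 1) (measurable_const.indicator ht)
      (memLp_indicator_const 2 (hY ht) (1 : ℝ) (Or.inr (measure_ne_top μ _)))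
    have hind : (fun ω => (f ω - q ω) * t.indicator (fun _ => (1 : ℝ)) (Y ω)) =
        (Y ⁻¹' t).indicator (f - q) := by
      ext ω
      by_cases hω : Y ω ∈ t <;> simp [hω]
    rw [hind, integral_indicator (hY ht), Pi.sub_def,
      integral_sub hf_int.integrableOn hq_int.integrableOn, sub_eq_zero] at ht_ind
    exact ht_ind.symm

lemma condExp_ite_eq_zero_ae_eq_one_sub [IsFiniteMeasure μ] (hm : m ≤ mΩ) {S : Ω → ℝ}
    (hS : Measurable S) (hS01 : ∀ ω, S ω = 0 ∨ S ω = 1) :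
    μ[fun ω => if S ω = 0 then (1 : ℝ) else 0 | m] =ᵐ[μ] 1 - μ⟦S ⁻¹' {1} | m⟧ := by
  have hcompl : (fun ω => if S ω = 0 then (1 : ℝ) else 0) =
      (fun _ => 1) - (S ⁻¹' {1}).indicator fun _ => 1 := by
    ext ω
    rcases hS01 ω with h | h <;> simp [h]
  rw [hcompl]
  filter_upwards [condExp_sub (integrable_const (1 : ℝ))
    ((integrable_const 1).indicator (hS (measurableSet_singleton 1))) m] with ω h
  rw [h, Pi.sub_apply, condExp_const hm, Pi.sub_apply, Pi.one_apply]

lemma norm_mul_one_sub_le_two {a b : ℝ} (ha : ‖a‖ ≤ 1) (hb : ‖b‖ ≤ 1) :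
    ‖a * (1 - b)‖ ≤ 2 := by
  rw [norm_mul]
  calc ‖a‖ * ‖1 - b‖ ≤ 1 * (‖(1 : ℝ)‖ + ‖b‖) :=
        mul_le_mul ha (norm_sub_le 1 b) (norm_nonneg _) zero_le_one
    _ ≤ 2 := by rw [norm_one]; linarith

lemma integral_mul_one_sub_sub_integral_one_sub_mul {a b g : Ω → ℝ}
    (ha : AEStronglyMeasurable a μ) (hb : AEStronglyMeasurable b μ)
    (ha1 : ∀ᵐ ω ∂μ, ‖a ω‖ ≤ 1) (hb1 : ∀ᵐ ω ∂μ, ‖b ω‖ ≤ 1) (hg : Integrable g μ) :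
    (∫ ω, a ω * (1 - b ω) * g ω ∂μ) - ∫ ω, (1 - a ω) * b ω * g ω ∂μ =
      ∫ ω, (a ω - b ω) * g ω ∂μ := by
  have hab : Integrable (fun ω => a ω * (1 - b ω) * g ω) μ :=
    hg.bdd_mul (ha.mul (aestronglyMeasurable_const.sub hb))
      (by filter_upwards [ha1, hb1] with ω h₁ h₂ using norm_mul_one_sub_le_two h₁ h₂)
  have hba : Integrable (fun ω => (1 - a ω) * b ω * g ω) μ :=
    hg.bdd_mul ((aestronglyMeasurable_const.sub ha).mul hb) (by
      filter_upwards [ha1, hb1] with ω h₁ h₂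
      rw [mul_comm]
      exact norm_mul_one_sub_le_two h₂ h₁)
  rw [← integral_sub hab hba]
  congr 1
  ext ω
  ring

lemma integral_sub_integral_eq_integral_indicator_sub_condExp_mul [IsFiniteMeasure μ]
    (hm : m ≤ mΩ) {S : Ω → ℝ} (hS : Measurable S) (hS01 : ∀ ω, S ω = 0 ∨ S ω = 1)
    {p0 p1 : Ω → ℝ} (hp0 : p0 =ᵐ[μ] μ[fun ω => if S ω = 0 then (1 : ℝ) else 0 | m])
    (hp1 : p1 =ᵐ[μ] μ[fun ω => if S ω = 1 then (1 : ℝ) else 0 | m])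
    {g : Ω → ℝ} (hg : Integrable g μ) :
    (∫ ω, (if S ω = 1 then (1 : ℝ) else 0) * p0 ω * g ω ∂μ)
      - (∫ ω, (if S ω = 0 then (1 : ℝ) else 0) * p1 ω * g ω ∂μ)
      = ∫ ω, ((S ⁻¹' {1}).indicator (fun _ => (1 : ℝ)) ω - (μ⟦S ⁻¹' {1} | m⟧) ω) * g ω ∂μ := by
  set I := (S ⁻¹' {1}).indicator fun _ => (1 : ℝ)
  have hI : ∀ ω, (if S ω = 1 then (1 : ℝ) else 0) = I ω := fun ω => by
    by_cases hω : S ω = 1 <;> simp [I, hω]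
  have hI_compl : ∀ ω, (if S ω = 0 then (1 : ℝ) else 0) = 1 - I ω := fun ω => by
    rcases hS01 ω with h | h <;> simp [I, h]
  have hI_bdd : ∀ ω, ‖I ω‖ ≤ 1 := fun ω => by
    by_cases hω : ω ∈ S ⁻¹' {1} <;> simp [I, hω]
  rw [← integral_mul_one_sub_sub_integral_one_sub_mul
    (measurable_const.indicator (hS (measurableSet_singleton 1))).aestronglyMeasurable
    (stronglyMeasurable_condExp.mono hm).aestronglyMeasurable (ae_of_all _ hI_bdd)
    (ae_bdd_norm_condExp_of_ae_bdd_norm (ae_of_all _ hI_bdd)) hg]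
  congr 1
  · refine integral_congr_ae ?_
    filter_upwards [hp0.trans (condExp_ite_eq_zero_ae_eq_one_sub hm hS hS01)] with ω hω
    rw [hω, hI, Pi.sub_apply, Pi.one_apply]
  · refine integral_congr_ae ?_
    filter_upwards [hp1.trans (condExp_congr_ae (ae_of_all _ hI))] with ω hω
    rw [hω, hI_compl]

end

theorem characterization_with_binary_variable_general
    {Ω : Type*} [MeasurableSpace Ω] [StandardBorelSpace Ω]
    {XF XZ : Type*} [MeasurableSpace XF]
    [MeasurableSpace XZ]
    (P : Measure Ω) [IsProbabilityMeasure P]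
    (S : Ω → ℝ) (hS : Measurable S) (hS01 : ∀ ω, S ω = 0 ∨ S ω = 1)
    (F : Ω → XF) (hF : Measurable F)
    (Z : Ω → XZ) (hZ : Measurable Z)
    (p0 p1 : Ω → ℝ)
    (hp0 : p0 =ᵐ[P]
      P[fun ω => if S ω = 0 then (1 : ℝ) else 0 | MeasurableSpace.comap F inferInstance])
    (hp1 : p1 =ᵐ[P]
      P[fun ω => if S ω = 1 then (1 : ℝ) else 0 | MeasurableSpace.comap F inferInstance]) :
    CondIndepFun (MeasurableSpace.comap F inferInstance) hF.comap_le Z S P ↔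
      ∀ h : XZ × XF → ℝ, Measurable h → MemLp (fun ω => h (Z ω, F ω)) 2 P →
        (∫ ω, (if S ω = 1 then (1 : ℝ) else 0) * p0 ω * h (Z ω, F ω) ∂P)
          - (∫ ω, (if S ω = 0 then (1 : ℝ) else 0) * p1 ω * h (Z ω, F ω) ∂P) = 0 := by
  have hI : MemLp ((S ⁻¹' {1}).indicator fun _ => (1 : ℝ)) 2 P :=
    memLp_indicator_const 2 (hS (measurableSet_singleton 1)) 1 (Or.inr (measure_ne_top P _))
  rw [condIndepFun_iff_condExp_comap_prodMk_ae_eq hZ hF hS hS01,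
    condExp_comap_ae_eq_iff_forall_integral_mul_eq_zero (hZ.prodMk hF) hI (hI.condExp one_le_two)
      (stronglyMeasurable_condExp.mono (comap_le_comap_prodMk_right Z F))]
  refine forall₂_congr fun h _ => forall_congr' fun hh => ?_
  rw [integral_sub_integral_eq_integral_indicator_sub_condExp_mul hF.comap_le hS hS01 hp0 hp1
    (hh.integrable one_le_two)]

/-- **Characterization with binary variable.**
If `S` takes values in `{0,1}`, then `Z` and `S` are conditionally independent given `F` if and
only if, for every measurable `h : 𝒳_Z × 𝒳_F → ℝ` with `E[h(Z,F)²] < ∞`, one has `Q(h) = 0`,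
where `Q(h) = E[𝟙{S=1} ⬝ P(S=0|F) ⬝ h(Z,F)] − E[𝟙{S=0} ⬝ P(S=1|F) ⬝ h(Z,F)]` and `P(S=s|F)` is
a version of `E[𝟙{S=s} | σ(F)]`. -/
theorem characterization_with_binary_variable
    {Ω : Type*} [MeasurableSpace Ω] [StandardBorelSpace Ω]
    {XF XZ : Type*} [MeasurableSpace XF] [StandardBorelSpace XF]
    [MeasurableSpace XZ] [StandardBorelSpace XZ]
    (P : Measure Ω) [IsProbabilityMeasure P]
    (S : Ω → ℝ) (hS : Measurable S) (hS01 : ∀ ω, S ω = 0 ∨ S ω = 1)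
    (F : Ω → XF) (hF : Measurable F)
    (Z : Ω → XZ) (hZ : Measurable Z)
    (p0 p1 : Ω → ℝ)
    (hp0 : p0 =ᵐ[P]
      P[fun ω => if S ω = 0 then (1 : ℝ) else 0 | MeasurableSpace.comap F inferInstance])
    (hp1 : p1 =ᵐ[P]
      P[fun ω => if S ω = 1 then (1 : ℝ) else 0 | MeasurableSpace.comap F inferInstance]) :
    CondIndepFun (MeasurableSpace.comap F inferInstance) hF.comap_le Z S P ↔
      ∀ h : XZ × XF → ℝ, Measurable h → MemLp (fun ω => h (Z ω, F ω)) 2 P →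
        (∫ ω, (if S ω = 1 then (1 : ℝ) else 0) * p0 ω * h (Z ω, F ω) ∂P)
          - (∫ ω, (if S ω = 0 then (1 : ℝ) else 0) * p1 ω * h (Z ω, F ω) ∂P) = 0 :=
  characterization_with_binary_variable_general P S hS hS01 F hF Z hZ p0 p1 hp0 hp1
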